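/- arXiv:2506.21750 — 4 statements merged into one kernel-verified Lean document; each statement's English description precedes it below -/
import Mathlib

section
/- Let Y and Z be finite metric spaces, let f : Y → Z, let C > 0 and N ∈ ℕ. Suppose every ball of radius C in Y contains at most N points, and suppose at least half of the points y ∈ Y satisfy diam(f⁻¹(f(y))) ≤ C. Then #Y ≤ 2·N·#(f(Y)); in particular #Y ≤ 2·N·#Z. -/
/-!
A point `y` whose fiber has diameter at most `C` has its whole fiber inside the closed
`C`-ball around `y`, so each value of `f` is taken by at most `N` such points. Since these
points make up at least half of `Y`, they have at least `#Y / (2N)` distinct images.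
-/

open Finset Metric

lemma preimage_singleton_subset_closedBall {Y Z : Type*} [PseudoMetricSpace Y] [Finite Y]
    {f : Y → Z} {C : ℝ} {y : Y} (hy : diam (f ⁻¹' {f y}) ≤ C) :
    f ⁻¹' {f y} ⊆ closedBall y C :=
  fun _ hx => (dist_le_diam_of_mem (Set.toFinite _).isBounded hx rfl).trans hy

lemma card_le_mul_card_image_of_diam_fiber_le {Y Z : Type*} [PseudoMetricSpace Y] [Fintype Y]
    [DecidableEq Z] (f : Y → Z) {C : ℝ} {N : ℕ} (hball : ∀ y : Y, Nat.card (closedBall y C) ≤ N)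
    (s : Finset Y) (hs : ∀ y ∈ s, diam (f ⁻¹' {f y}) ≤ C) : #s ≤ N * #(s.image f) := by
  classical
  refine card_le_mul_card_image s N fun z hz => ?_
  obtain ⟨y, hy, rfl⟩ := mem_image.mp hz
  calc #{x ∈ s | f x = f y} ≤ #(closedBall y C).toFinset :=
        card_le_card fun x hx => by
          simpa using preimage_singleton_subset_closedBall (hs y hy) (mem_filter.mp hx).2
    _ = Nat.card (closedBall y C) := (Nat.card_eq_card_toFinset _).symm
    _ ≤ N := hball y

theorem stmt_4_general {Y Z : Type*} [MetricSpace Y] [Fintype Y] [Fintype Z]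
    (f : Y → Z) (C : ℝ) (N : ℕ)
    (hball : ∀ y : Y, Nat.card {y' : Y // dist y' y ≤ C} ≤ N)
    (hhalf : Fintype.card Y ≤ 2 * Nat.card {y : Y // Metric.diam (f ⁻¹' {f y}) ≤ C}) :
    Fintype.card Y ≤ 2 * N * Nat.card (Set.range f) ∧
    Fintype.card Y ≤ 2 * N * Fintype.card Z := by
  classical
  set S : Finset Y := {y | diam (f ⁻¹' {f y}) ≤ C}
  have hS : Nat.card {y : Y // diam (f ⁻¹' {f y}) ≤ C} = #S := by
    rw [Nat.card_eq_fintype_card, Fintype.card_subtype]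
  have hsmall : #S ≤ N * #(S.image f) :=
    card_le_mul_card_image_of_diam_fiber_le f hball S fun y hy => (mem_filter.mp hy).2
  have himage : #(S.image f) ≤ Nat.card (Set.range f) := by
    rw [Nat.card_eq_card_toFinset]
    exact card_le_card fun z hz => by simpa using Set.image_subset_range f S (by simpa using hz)
  have hrange : Nat.card (Set.range f) ≤ Fintype.card Z :=
    (Finite.card_subtype_le (· ∈ Set.range f)).trans_eq Nat.card_eq_fintype_card
  have hmain : Fintype.card Y ≤ 2 * N * Nat.card (Set.range f) :=
    calc Fintype.card Y ≤ 2 * #S := hS ▸ hhalf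
      _ ≤ 2 * (N * Nat.card (Set.range f)) := Nat.mul_le_mul_left 2 (hsmall.trans (Nat.mul_le_mul_left N himage))
      _ = 2 * N * Nat.card (Set.range f) := (mul_assoc ..).symm
  exact ⟨hmain, hmain.trans (Nat.mul_le_mul_left _ hrange)⟩

/-- coarse-injectivity half of Proposition 3.3, finitary form:
if every ball of radius `C` in `Y` has at most `N` points and at least half of the
points `y ∈ Y` have fibers `f⁻¹(f(y))` of diameter at most `C`, then
`#Y ≤ 2·N·#f(Y)`, and in particular `#Y ≤ 2·N·#Z`. -/
theorem stmt_4 {Y Z : Type*} [MetricSpace Y] [MetricSpace Z] [Fintype Y] [Fintype Z]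
    (f : Y → Z) (C : ℝ) (hC : 0 < C) (N : ℕ)
    (hball : ∀ y : Y, Nat.card {y' : Y // dist y' y ≤ C} ≤ N)
    (hhalf : Fintype.card Y ≤ 2 * Nat.card {y : Y // Metric.diam (f ⁻¹' {f y}) ≤ C}) :
    Fintype.card Y ≤ 2 * N * Nat.card (Set.range f) ∧
    Fintype.card Y ≤ 2 * N * Fintype.card Z :=
  stmt_4_general f C N hball hhalf
end

section
/- Let k ≥ 2 and let (ε_i), (ε'_i) be two finitely supported sequences of integers with 0 ≤ ε_i, ε'_i ≤ k − 1. Let ℓ be the maximal index with ε_ℓ ≠ ε'_ℓ and suppose ε'_ℓ > ε_ℓ. Let t be the maximal index t < ℓ such that ε'_t − ε_t ≠ −(k − 1) (assuming such t exists). Then Σ_i (ε'_i − ε_i)·kⁱ ≥ kᵗ. -/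
/-! Write `dᵢ = ε'ᵢ - εᵢ`. Every digit difference is at least `1 - k`, and the digit strings
`1 - k` sum to `1 - kⁿ` (a geometric sum), so the part of `Σ dᵢ kⁱ` below `ℓ` is at least
`1 - k^ℓ`, with an extra `kᵗ` because `dₜ ≥ 2 - k`. The top term `d_ℓ k^ℓ ≥ k^ℓ` absorbs the
`-k^ℓ`, leaving `1 + kᵗ`. -/

open Finset

section DigitSums

variable {R : Type*} [CommRing R] [LinearOrder R] [IsStrictOrderedRing R]
  {x : R} {d : ℕ → R}

theorem pow_sub_pow_le_sum_Ico_mul_pow (hx : 0 ≤ x) {m n : ℕ} (hmn : m ≤ n)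
    (hd : ∀ i ∈ Ico m n, 1 - x ≤ d i) :
    x ^ m - x ^ n ≤ ∑ i ∈ Ico m n, d i * x ^ i := by
  calc x ^ m - x ^ n = ∑ i ∈ Ico m n, (1 - x) * x ^ i := by
        rw [← mul_sum, mul_comm, geom_sum_Ico_mul_neg x hmn]
    _ ≤ ∑ i ∈ Ico m n, d i * x ^ i :=
        sum_le_sum fun i hi => mul_le_mul_of_nonneg_right (hd i hi) (pow_nonneg hx i)

theorem pow_le_sum_range_mul_pow (hx : 0 ≤ x) {t n : ℕ} (htn : t < n)
    (hd : ∀ i < n, 1 - x ≤ d i) (ht : 2 - x ≤ d t) (hn : 1 ≤ d n) :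
    x ^ t ≤ ∑ i ∈ range (n + 1), d i * x ^ i := by
  have hlow : 1 - x ^ t ≤ ∑ i ∈ range t, d i * x ^ i := by
    simpa only [pow_zero, Nat.Ico_zero_eq_range] using pow_sub_pow_le_sum_Ico_mul_pow hx
      t.zero_le fun i hi => hd i ((mem_Ico.1 hi).2.trans htn)
  have hmid : x ^ (t + 1) - x ^ n ≤ ∑ i ∈ Ico (t + 1) n, d i * x ^ i :=
    pow_sub_pow_le_sum_Ico_mul_pow hx htn fun i hi => hd i (mem_Ico.1 hi).2
  have hdt : (2 - x) * x ^ t ≤ d t * x ^ t := mul_le_mul_of_nonneg_right ht (pow_nonneg hx t)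
  have hdn : x ^ n ≤ d n * x ^ n := le_mul_of_one_le_left (pow_nonneg hx n) hn
  rw [sum_range_succ, ← sum_range_add_sum_Ico _ htn, sum_range_succ]
  rw [pow_succ] at hmid
  linarith

end DigitSums

theorem stmt_7_general (k : ℕ) (ε ε' : ℕ →₀ ℤ)
    (hε : ∀ i, 0 ≤ ε i ∧ ε i ≤ (k : ℤ) - 1)
    (hε' : ∀ i, 0 ≤ ε' i ∧ ε' i ≤ (k : ℤ) - 1)
    (ℓ : ℕ) (hmax : ∀ i, ℓ < i → ε i = ε' i)
    (hlt : ε ℓ < ε' ℓ)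
    (t : ℕ) (ht : t < ℓ) (htne : ε' t - ε t ≠ -((k : ℤ) - 1)) :
    (k : ℤ) ^ t ≤ ∑ i ∈ ε.support ∪ ε'.support, (ε' i - ε i) * (k : ℤ) ^ i := by
  set f : ℕ → ℤ := fun i => (ε' i - ε i) * (k : ℤ) ^ i
  have hsum : ∑ i ∈ ε.support ∪ ε'.support, f i = ∑ i ∈ range (ℓ + 1), f i := by
    calc _ = ∑ i ∈ (ε.support ∪ ε'.support) ∪ range (ℓ + 1), f i :=
          sum_subset subset_union_left fun i _ hi => by simp_all [f]
      _ = _ := (sum_subset subset_union_right fun i _ hi => by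
          simp [f, hmax i (by simpa using hi)]).symm
  have hdigit : ∀ i, 1 - (k : ℤ) ≤ ε' i - ε i := fun i => by linarith [(hε i).2, (hε' i).1]
  rw [hsum]
  exact pow_le_sum_range_mul_pow (Nat.cast_nonneg k) ht (fun i _ => hdigit i)
    (by have := hdigit t; omega) (by omega)

/-- key digit lemma, Claim 8.3: if `ℓ` is the top discrepancy index of
two digit strings `ε, ε'` with `ε'_ℓ > ε_ℓ`, and `t < ℓ` is the maximal index with
`ε'_t − ε_t ≠ −(k−1)`, then `Σᵢ (ε'ᵢ − εᵢ)·kⁱ ≥ kᵗ`. -/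
theorem stmt_7 (k : ℕ) (hk : 2 ≤ k) (ε ε' : ℕ →₀ ℤ)
    (hε : ∀ i, 0 ≤ ε i ∧ ε i ≤ (k : ℤ) - 1)
    (hε' : ∀ i, 0 ≤ ε' i ∧ ε' i ≤ (k : ℤ) - 1)
    (ℓ : ℕ) (hne : ε ℓ ≠ ε' ℓ) (hmax : ∀ i, ℓ < i → ε i = ε' i)
    (hlt : ε ℓ < ε' ℓ)
    (t : ℕ) (ht : t < ℓ) (htne : ε' t - ε t ≠ -((k : ℤ) - 1))
    (htmax : ∀ i, t < i → i < ℓ → ε' i - ε i = -((k : ℤ) - 1)) :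
    (k : ℤ) ^ t ≤ ∑ i ∈ ε.support ∪ ε'.support, (ε' i - ε i) * (k : ℤ) ^ i :=
  stmt_7_general k ε ε' hε hε' ℓ hmax hlt t ht htne
end

section
/- Let k ≥ 2, q ≥ 0 and let (ε_i), (ε'_i) be finitely supported sequences with values in {0, …, k−1}. Suppose |Σ_i (ε'_i − ε_i)·kⁱ| ≤ k^q and let ℓ be the maximal index with ε_ℓ ≠ ε'_ℓ. If ℓ ≥ q + 1, then for every i with q + 1 ≤ i ≤ ℓ − 1 one has either (ε_i = k − 1 and ε'_i = 0) for all such i, or (ε_i = 0 and ε'_i = k − 1) for all such i (according to whether ε'_ℓ > ε_ℓ or ε'_ℓ < ε_ℓ). -/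
/-!
Put `dᵢ = ε'ᵢ - εᵢ ∈ [-(k-1), k-1]` and suppose `d_ℓ ≥ 1`. Since `∑_{i<ℓ} (k-1) kⁱ = k^ℓ - 1`,
the lower digits leave at least `1` of `d_ℓ k^ℓ ≥ k^ℓ` uncancelled, and every lower digit `d_j`
other than the extremal value `-(k-1)` leaves a further `k^j`. For `j > q` this pushes the sum
above `k^q`, so `d_j = -(k-1)`, i.e. `ε_j = k-1` and `ε'_j = 0`. The case `d_ℓ ≤ -1` is the
same statement with `ε` and `ε'` exchanged.
-/

open Finset

section DigitSums

variable {k : ℤ} {d : ℕ → ℤ} {ℓ j : ℕ}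

lemma sum_range_mul_pow_lower_bound (hk : 0 ≤ k) (hd : ∀ i < ℓ, -(k - 1) ≤ d i) (hj : j < ℓ) :
    (d j + (k - 1)) * k ^ j - (k ^ ℓ - 1) ≤ ∑ i ∈ range ℓ, d i * k ^ i := by
  have hsingle : (d j + (k - 1)) * k ^ j ≤ ∑ i ∈ range ℓ, (d i + (k - 1)) * k ^ i :=
    single_le_sum (f := fun i => (d i + (k - 1)) * k ^ i)
      (fun i hi => mul_nonneg (by linarith [hd i (mem_range.mp hi)]) (pow_nonneg hk i))
      (mem_range.mpr hj)
  have hgeom : ∑ i ∈ range ℓ, (k - 1) * k ^ i = k ^ ℓ - 1 := by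
    rw [← mul_sum, mul_comm, geom_sum_mul]
  simp only [add_mul, sum_add_distrib, hgeom] at hsingle
  linarith

lemma eq_neg_of_sum_range_succ_mul_pow_le (hk : 1 ≤ k) (hd : ∀ i < ℓ, -(k - 1) ≤ d i)
    (hℓ : 0 < d ℓ) (hj : j < ℓ) (hsum : ∑ i ∈ range (ℓ + 1), d i * k ^ i ≤ k ^ j) :
    d j = -(k - 1) := by
  have hlower := sum_range_mul_pow_lower_bound (by linarith) hd hj
  have htop : k ^ ℓ ≤ d ℓ * k ^ ℓ := le_mul_of_one_le_left (pow_nonneg (by linarith) ℓ) hℓ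
  rw [sum_range_succ] at hsum
  have hlt : (d j + (k - 1)) * k ^ j < 1 * k ^ j := by linarith
  have := lt_of_mul_lt_mul_right hlt (pow_nonneg (by linarith) j)
  linarith [hd j hj]

end DigitSums

lemma sum_union_support_sub_mul_pow_eq_sum_range (ε ε' : ℕ →₀ ℤ) (k : ℤ) {ℓ : ℕ}
    (hmax : ∀ i, ℓ < i → ε i = ε' i) :
    ∑ i ∈ ε.support ∪ ε'.support, (ε' i - ε i) * k ^ i =
      ∑ i ∈ range (ℓ + 1), (ε' i - ε i) * k ^ i := by
  have hsupp : ∀ i ∈ ε.support ∪ ε'.support ∪ range (ℓ + 1), i ∉ ε.support ∪ ε'.support →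
      (ε' i - ε i) * k ^ i = 0 := by
    intro i _ hi
    simp only [mem_union, Finsupp.mem_support_iff, not_or, not_not] at hi
    rw [hi.1, hi.2, sub_self, zero_mul]
  have hrange : ∀ i ∈ ε.support ∪ ε'.support ∪ range (ℓ + 1), i ∉ range (ℓ + 1) →
      (ε' i - ε i) * k ^ i = 0 := by
    intro i _ hi
    rw [mem_range, not_lt] at hi
    rw [hmax i hi, sub_self, zero_mul]
  rw [sum_subset subset_union_left hsupp, sum_subset subset_union_right hrange]

lemma digits_extremal_of_lt {k : ℤ} {q ℓ j : ℕ} {ε ε' : ℕ → ℤ} (hk : 1 ≤ k)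
    (hε : ∀ i, 0 ≤ ε i ∧ ε i ≤ k - 1) (hε' : ∀ i, 0 ≤ ε' i ∧ ε' i ≤ k - 1)
    (hsum : ∑ i ∈ range (ℓ + 1), (ε' i - ε i) * k ^ i ≤ k ^ q) (hlt : ε ℓ < ε' ℓ)
    (hqj : q < j) (hjℓ : j < ℓ) :
    ε j = k - 1 ∧ ε' j = 0 := by
  have hd := eq_neg_of_sum_range_succ_mul_pow_le (d := fun i => ε' i - ε i) hk
    (fun i _ => by linarith [hε i, hε' i]) (sub_pos.mpr hlt) hjℓ
    (hsum.trans (pow_le_pow_right₀ hk hqj.le))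
  constructor <;> linarith [hε j, hε' j]

theorem stmt_8_general (k q : ℕ) (hk : 2 ≤ k) (ε ε' : ℕ →₀ ℤ)
    (hε : ∀ i, 0 ≤ ε i ∧ ε i ≤ (k : ℤ) - 1)
    (hε' : ∀ i, 0 ≤ ε' i ∧ ε' i ≤ (k : ℤ) - 1)
    (hsum : |∑ i ∈ ε.support ∪ ε'.support, (ε' i - ε i) * (k : ℤ) ^ i| ≤ (k : ℤ) ^ q)
    (ℓ : ℕ) (hmax : ∀ i, ℓ < i → ε i = ε' i) :
    (ε ℓ < ε' ℓ → ∀ i, q + 1 ≤ i → i < ℓ → ε i = (k : ℤ) - 1 ∧ ε' i = 0) ∧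
    (ε' ℓ < ε ℓ → ∀ i, q + 1 ≤ i → i < ℓ → ε i = 0 ∧ ε' i = (k : ℤ) - 1) := by
  have hk1 : (1 : ℤ) ≤ k := by exact_mod_cast one_le_two.trans hk
  rw [sum_union_support_sub_mul_pow_eq_sum_range ε ε' k hmax] at hsum
  obtain ⟨hge, hle⟩ := abs_le.mp hsum
  have hle' : ∑ i ∈ range (ℓ + 1), (ε i - ε' i) * (k : ℤ) ^ i ≤ (k : ℤ) ^ q := by
    simpa only [← sum_neg_distrib, ← neg_mul, neg_sub] using neg_le_of_neg_le hge
  exact ⟨fun hlt i hqi hiℓ => digits_extremal_of_lt hk1 hε hε' hle hlt hqi hiℓ,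
    fun hlt i hqi hiℓ => (digits_extremal_of_lt hk1 hε' hε hle' hlt hqi hiℓ).symm⟩

/-- Claim 8.3: if `|Σᵢ (ε'ᵢ − εᵢ)·kⁱ| ≤ k^q` and `ℓ ≥ q+1` is the maximal
index where the digit strings differ, then all digits in positions `q+1 ≤ i ≤ ℓ−1` are
extremal: `εᵢ = k−1, ε'ᵢ = 0` if `ε'_ℓ > ε_ℓ`, and `εᵢ = 0, ε'ᵢ = k−1` if `ε'_ℓ < ε_ℓ`. -/
theorem stmt_8 (k q : ℕ) (hk : 2 ≤ k) (ε ε' : ℕ →₀ ℤ)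
    (hε : ∀ i, 0 ≤ ε i ∧ ε i ≤ (k : ℤ) - 1)
    (hε' : ∀ i, 0 ≤ ε' i ∧ ε' i ≤ (k : ℤ) - 1)
    (hsum : |∑ i ∈ ε.support ∪ ε'.support, (ε' i - ε i) * (k : ℤ) ^ i| ≤ (k : ℤ) ^ q)
    (ℓ : ℕ) (hne : ε ℓ ≠ ε' ℓ) (hmax : ∀ i, ℓ < i → ε i = ε' i)
    (hℓq : q + 1 ≤ ℓ) :
    (ε ℓ < ε' ℓ → ∀ i, q + 1 ≤ i → i < ℓ → ε i = (k : ℤ) - 1 ∧ ε' i = 0) ∧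
    (ε' ℓ < ε ℓ → ∀ i, q + 1 ≤ i → i < ℓ → ε i = 0 ∧ ε' i = (k : ℤ) - 1) :=
  stmt_8_general k q hk ε ε' hε hε' hsum ℓ hmax
end

section
/- Let k ≥ 2 be a real number and n ≥ 1. Then ∫₀ⁿ (k^{n+1} + 2·k^j)² dj ≤ (n + 6)·k^{2n+2}. -/
/-! Integrating `(A + c kʲ)²` explicitly against the antiderivative
`A² j + (2Ac kʲ + c² k²ʲ / 2) / log k` gives, for `A = kⁿ⁺¹` and `c = 2`, at most
`A² n + (4A kⁿ + 2k²ⁿ) / log k`. Since `log k ≥ log 2 > 1/2`, the second term is at most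
`(8k + 4) k²ⁿ ≤ 6 k² k²ⁿ = 6A²` once `k ≥ 2`. -/

open Real

theorem hasDerivAt_sq_const_add_mul_rpow {k : ℝ} (hk : 0 < k) (hlog : log k ≠ 0) (A c x : ℝ) :
    HasDerivAt (fun j => A ^ 2 * j + (2 * A * c * k ^ j + c ^ 2 / 2 * (k ^ j) ^ 2) / log k)
      ((A + c * k ^ x) ^ 2) x := by
  have hexp : HasDerivAt (fun j : ℝ => k ^ j) (k ^ x * log k) x :=
    (hasStrictDerivAt_const_rpow hk x).hasDerivAt
  have hF := ((hasDerivAt_id x).const_mul (A ^ 2)).add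
    (((hexp.const_mul (2 * A * c)).add ((hexp.pow 2).const_mul (c ^ 2 / 2))).div_const (log k))
  refine hF.congr_deriv ?_
  push_cast
  field_simp
  ring

theorem integral_sq_const_add_mul_rpow {k : ℝ} (hk : 0 < k) (hlog : log k ≠ 0) (A c a b : ℝ) :
    ∫ j in a..b, (A + c * k ^ j) ^ 2 =
      A ^ 2 * (b - a) +
        (2 * A * c * (k ^ b - k ^ a) + c ^ 2 * ((k ^ b) ^ 2 - (k ^ a) ^ 2) / 2) / log k := by
  have hcont : Continuous fun j : ℝ => (A + c * k ^ j) ^ 2 := by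
    have : Continuous fun j : ℝ => k ^ j :=
      continuous_const.rpow continuous_id fun _ => Or.inl hk.ne'
    fun_prop
  rw [intervalIntegral.integral_eq_sub_of_hasDerivAt
    (fun x _ => hasDerivAt_sq_const_add_mul_rpow hk hlog A c x) (hcont.intervalIntegrable a b)]
  ring

theorem four_mul_add_two_le_six_mul_sq_mul_log {k : ℝ} (hk : 2 ≤ k) :
    4 * k + 2 ≤ 6 * k ^ 2 * log k := by
  have hlog : log 2 ≤ log k := log_le_log two_pos hk
  have hlog2 := log_two_gt_d9
  nlinarith

theorem stmt_12_general (k : ℝ) (hk : 2 ≤ k) (n : ℕ) :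
    ∫ j in (0 : ℝ)..(n : ℝ), (k ^ ((n : ℝ) + 1) + 2 * k ^ j) ^ 2 ≤
      ((n : ℝ) + 6) * k ^ (2 * (n : ℝ) + 2) := by
  have hk0 : 0 < k := by linarith
  have hL : 0 < log k := log_pos (by linarith)
  have hpow : k ^ ((n : ℝ) + 1) = k * k ^ (n : ℝ) := by
    rw [rpow_add_one hk0.ne', mul_comm]
  have hpow2 : k ^ (2 * (n : ℝ) + 2) = (k * k ^ (n : ℝ)) ^ 2 := by
    rw [← hpow, ← rpow_natCast, ← rpow_mul hk0.le]
    push_cast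
    ring_nf
  rw [integral_sq_const_add_mul_rpow hk0 hL.ne', rpow_zero, hpow, hpow2]
  set B := k ^ (n : ℝ)
  have hB : 0 < B := by positivity
  have hsecond : (2 * (k * B) * 2 * (B - 1) + 2 ^ 2 * (B ^ 2 - 1 ^ 2) / 2) / log k ≤
      6 * (k * B) ^ 2 := by
    rw [div_le_iff₀ hL]
    nlinarith [mul_le_mul_of_nonneg_right (four_mul_add_two_le_six_mul_sq_mul_log hk)
      (sq_nonneg B)]
  linarith

/-- Følner estimate for `F_n^SOL ⊆ SOL_ℝ`: for a real `k ≥ 2` and `n ≥ 1`,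
`∫₀ⁿ (k^{n+1} + 2·k^j)² dj ≤ (n + 6)·k^{2n+2}`. -/
theorem stmt_12 (k : ℝ) (hk : 2 ≤ k) (n : ℕ) (hn : 1 ≤ n) :
    ∫ j in (0 : ℝ)..(n : ℝ), (k ^ ((n : ℝ) + 1) + 2 * k ^ j) ^ 2 ≤
      ((n : ℝ) + 6) * k ^ (2 * (n : ℝ) + 2) :=
  stmt_12_general k hk n
end
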